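/- Let v : [0,∞) → ℝ be continuously differentiable on (0,∞) and continuous at 0, and let α ∈ (0,1). Then for every t > 0, the Caputo derivative ∂_t^α v(t) := d/dt ∫_0^t (v(τ) - v(0)) (t-τ)^{-α} dτ equals α ∫_0^t (v(t) - v(τ)) (t-τ)^{-1-α} dτ + (v(t) - v(0)) t^{-α}. -/
import Mathlib


open Real MeasureTheory
open Set intervalIntegral

lemma K2 {α u r : ℝ} (hα : α ∈ Set.Ioo (0:ℝ) 1) (hur : u < r) :
    ∫ s in Set.Ioo u r, (s - u) ^ (-α) = (r - u) ^ (1 - α) / (1 - α) := by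
  rw [← integral_Ioc_eq_integral_Ioo, ← intervalIntegral.integral_of_le hur.le]
  have : (∫ s in u..r, (s - u) ^ (-α)) = ∫ x in u - u..r - u, x ^ (-α) :=
    (intervalIntegral.integral_comp_sub_right (fun x => x ^ (-α)) u)
  rw [this, sub_self]
  rw [integral_rpow (Or.inl (by linarith [hα.2] : (-1:ℝ) < -α))]
  rw [Real.zero_rpow (by linarith [hα.2] : -α + 1 ≠ 0)]
  ring_nf
lemma K1 {α u r : ℝ} (hα : α ∈ Set.Ioo (0:ℝ) 1) (hur : u < r) :
    ∫ τ in Set.Ioo u r, (r - τ) ^ (-α) = (r - u) ^ (1 - α) / (1 - α) := by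
  rw [← integral_Ioc_eq_integral_Ioo, ← intervalIntegral.integral_of_le hur.le]
  have : (∫ τ in u..r, (r - τ) ^ (-α)) = ∫ x in r - r..r - u, x ^ (-α) :=
    (intervalIntegral.integral_comp_sub_left (fun x => x ^ (-α)) r)
  rw [this, sub_self]
  rw [integral_rpow (Or.inl (by linarith [hα.2] : (-1:ℝ) < -α))]
  rw [Real.zero_rpow (by linarith [hα.2] : -α + 1 ≠ 0)]
  ring_nf

lemma K3 {α u t : ℝ} (hα : α ∈ Set.Ioo (0:ℝ) 1) (hu : 0 < u) (hut : u < t) :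
    ∫ τ in Set.Ioo 0 u, (t - τ) ^ (-1 - α) = ((t - u) ^ (-α) - t ^ (-α)) / α := by
  rw [← integral_Ioc_eq_integral_Ioo, ← intervalIntegral.integral_of_le hu.le]
  have : (∫ τ in (0:ℝ)..u, (t - τ) ^ (-1 - α)) = ∫ x in t - u..t - 0, x ^ (-1 - α) :=
    (intervalIntegral.integral_comp_sub_left (fun x => x ^ (-1 - α)) t)
  rw [this, sub_zero]
  have hne : (-1 - α : ℝ) ≠ -1 := by have := hα.1; intro h; linarith
  have hnotin : (0:ℝ) ∉ Set.uIcc (t - u) t := by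
    intro h0
    rcases Set.mem_uIcc.1 h0 with ⟨h2, h3⟩ | ⟨h2, h3⟩ <;> linarith
  rw [integral_rpow (Or.inr ⟨hne, hnotin⟩)]
  have h1 : -1 - α + 1 = -α := by ring
  rw [h1]
  have hα0 : α ≠ 0 := ne_of_gt hα.1
  rw [div_neg, ← neg_div, neg_sub]


lemma triangle_isOpen (a b : ℝ) : IsOpen {p : ℝ × ℝ | a < p.1 ∧ p.1 < p.2 ∧ p.2 < b} := by
  have h1 : IsOpen {p : ℝ × ℝ | a < p.1} := isOpen_lt continuous_const continuous_fst
  have h2 : IsOpen {p : ℝ × ℝ | p.1 < p.2} := isOpen_lt continuous_fst continuous_snd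
  have h3 : IsOpen {p : ℝ × ℝ | p.2 < b} := isOpen_lt continuous_snd continuous_const
  have : {p : ℝ × ℝ | a < p.1 ∧ p.1 < p.2 ∧ p.2 < b}
      = {p : ℝ × ℝ | a < p.1} ∩ ({p : ℝ × ℝ | p.1 < p.2} ∩ {p : ℝ × ℝ | p.2 < b}) := by
    ext p; simp [and_assoc]
  rw [this]; exact h1.inter (h2.inter h3)

lemma Ia {α : ℝ} (hα : α ∈ Set.Ioo (0:ℝ) 1) (a r : ℝ) :
    IntervalIntegrable (fun τ => (r - τ) ^ (-α)) volume a r := by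
  have h := (intervalIntegral.intervalIntegrable_rpow' (a := r - a) (b := 0)
    (by linarith [hα.2] : (-1:ℝ) < -α)).comp_sub_left r
  simpa using h

lemma Ib {α : ℝ} (hα : α ∈ Set.Ioo (0:ℝ) 1) (u r : ℝ) :
    IntervalIntegrable (fun s => (s - u) ^ (-α)) volume u r := by
  have h := (intervalIntegral.intervalIntegrable_rpow' (a := (0:ℝ)) (b := r - u)
    (by linarith [hα.2] : (-1:ℝ) < -α)).comp_sub_right u
  simpa using h

lemma Imul {α : ℝ} (hα : α ∈ Set.Ioo (0:ℝ) 1) {t : ℝ} (ht : 0 < t) {w : ℝ → ℝ}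
    (hw_int : IntervalIntegrable w volume 0 t) (hw_cont : ContinuousOn w (Set.Ioi 0)) :
    IntervalIntegrable (fun u => w u * (t - u) ^ (-α)) volume 0 t := by
  have hsub : Set.uIcc (0:ℝ) (t/2) ⊆ Set.uIcc 0 t := by
    rw [Set.uIcc_of_le (by linarith), Set.uIcc_of_le (by linarith)]
    exact Set.Icc_subset_Icc le_rfl (by linarith)
  have p1 : IntervalIntegrable (fun u => w u * (t - u) ^ (-α)) volume 0 (t/2) := by
    apply (hw_int.mono_set hsub).mul_continuousOn
    apply (continuousOn_const.sub continuousOn_id).rpow_const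
    intro x hx
    rw [Set.uIcc_of_le (by linarith : (0:ℝ) ≤ t/2)] at hx
    exact Or.inl (ne_of_gt (by linarith [hx.2] : (0:ℝ) < t - x))
  have p2 : IntervalIntegrable (fun u => w u * (t - u) ^ (-α)) volume (t/2) t := by
    apply (Ia hα (t/2) t).continuousOn_mul
    refine hw_cont.mono ?_
    rw [Set.uIcc_of_le (by linarith)]
    intro x hx
    exact Set.mem_Ioi.2 (lt_of_lt_of_le (by linarith) hx.1)
  exact p1.trans p2

lemma T1int {α : ℝ} (hα : α ∈ Set.Ioo (0:ℝ) 1) {t : ℝ} (ht : 0 < t) {w : ℝ → ℝ}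
    (hw_int : IntervalIntegrable w volume 0 t) :
    IntegrableOn (fun p : ℝ × ℝ => w p.1 * (t - p.2) ^ (-α))
      {p : ℝ × ℝ | 0 < p.1 ∧ p.1 < p.2 ∧ p.2 < t} volume := by
  have hbig : IntegrableOn (fun p : ℝ × ℝ => w p.1 * (t - p.2) ^ (-α))
      (Set.Ioo 0 t ×ˢ Set.Ioo 0 t) volume := by
    rw [IntegrableOn, Measure.volume_eq_prod, ← Measure.prod_restrict]
    exact Integrable.mul_prod ((intervalIntegrable_iff_integrableOn_Ioo_of_le ht.le).1 hw_int)
      ((intervalIntegrable_iff_integrableOn_Ioo_of_le ht.le).1 (Ia hα 0 t))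
  refine hbig.mono_set ?_
  intro p hp
  exact ⟨⟨hp.1, lt_trans hp.2.1 hp.2.2⟩, ⟨lt_trans hp.1 hp.2.1, hp.2.2⟩⟩

lemma T2int {α : ℝ} (hα : α ∈ Set.Ioo (0:ℝ) 1) {t : ℝ} (ht : 0 < t) {w : ℝ → ℝ}
    (hw_int : IntervalIntegrable w volume 0 t) (hw_cont : ContinuousOn w (Set.Ioi 0)) :
    IntegrableOn (fun p : ℝ × ℝ => w p.1 * (p.2 - p.1) ^ (-α))
      {p : ℝ × ℝ | 0 < p.1 ∧ p.1 < p.2 ∧ p.2 < t} volume := by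
  set T := {p : ℝ × ℝ | 0 < p.1 ∧ p.1 < p.2 ∧ p.2 < t} with hTdef
  set F : ℝ × ℝ → ℝ := fun p => w p.1 * (p.2 - p.1) ^ (-α) with hFdef
  have hTm : MeasurableSet T := (triangle_isOpen 0 t).measurableSet
  rw [← integrable_indicator_iff hTm]
  have hcontF : ContinuousOn F T := by
    apply ContinuousOn.mul
    · exact hw_cont.comp continuous_fst.continuousOn (fun p hp => hp.1)
    · exact (continuous_snd.continuousOn.sub continuous_fst.continuousOn).rpow_const
        (fun p hp => Or.inl (ne_of_gt (sub_pos.2 hp.2.1)))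
  have hmeas : AEStronglyMeasurable (T.indicator F) (volume.prod volume) := by
    rw [← Measure.volume_eq_prod]
    exact (aestronglyMeasurable_indicator_iff hTm).2 (hcontF.aestronglyMeasurable hTm)
  rw [Measure.volume_eq_prod]
  refine (integrable_prod_iff hmeas).2 ⟨?_, ?_⟩
  · refine Filter.Eventually.of_forall (fun u => ?_)
    by_cases hu : 0 < u ∧ u < t
    · have heq : (fun s => T.indicator F (u, s))
          = (Set.Ioo u t).indicator (fun s => w u * (s - u) ^ (-α)) := by
        funext s
        by_cases hs : s ∈ Set.Ioo u t
        · have hmem : (u, s) ∈ T := ⟨hu.1, hs.1, hs.2⟩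
          rw [Set.indicator_of_mem hs, Set.indicator_of_mem hmem]
        · have hmem : (u, s) ∉ T := fun hmem => hs ⟨hmem.2.1, hmem.2.2⟩
          rw [Set.indicator_of_notMem hs, Set.indicator_of_notMem hmem]
      rw [heq, integrable_indicator_iff measurableSet_Ioo]
      exact (intervalIntegrable_iff_integrableOn_Ioo_of_le hu.2.le).1 ((Ib hα u t).const_mul (w u))
    · have heq : (fun s => T.indicator F (u, s)) = fun _ => (0:ℝ) := by
        funext s
        have hmem : (u, s) ∉ T := fun hmem => hu ⟨hmem.1, lt_trans hmem.2.1 hmem.2.2⟩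
        exact Set.indicator_of_notMem hmem _
      rw [heq]
      exact integrable_zero _ _ _
  · have heq : (fun u => ∫ s, ‖T.indicator F (u, s)‖)
        = (Set.Ioo 0 t).indicator (fun u => ‖w u‖ * ((t - u) ^ (1 - α) / (1 - α))) := by
      funext u
      by_cases hu : u ∈ Set.Ioo 0 t
      · rw [Set.indicator_of_mem hu]
        have hnorm : (fun s => ‖T.indicator F (u, s)‖)
            = (Set.Ioo u t).indicator (fun s => ‖w u‖ * (s - u) ^ (-α)) := by
          funext s
          by_cases hs : s ∈ Set.Ioo u t
          · have hmem : (u, s) ∈ T := ⟨hu.1, hs.1, hs.2⟩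
            rw [Set.indicator_of_mem hs, Set.indicator_of_mem hmem, hFdef]
            simp only [norm_mul]
            rw [Real.norm_eq_abs ((s - u) ^ (-α)),
              abs_of_nonneg (Real.rpow_nonneg (by linarith [hs.1] : (0:ℝ) ≤ s - u) _)]
          · have hmem : (u, s) ∉ T := fun hmem => hs ⟨hmem.2.1, hmem.2.2⟩
            rw [Set.indicator_of_notMem hs, Set.indicator_of_notMem hmem, norm_zero]
        rw [hnorm, MeasureTheory.integral_indicator measurableSet_Ioo, MeasureTheory.integral_const_mul,
          K2 hα hu.2]
      · rw [Set.indicator_of_notMem hu]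
        have h0 : ∀ s, T.indicator F (u, s) = 0 := fun s => by
          have hmem : (u, s) ∉ T := fun hmem => hu ⟨hmem.1, lt_trans hmem.2.1 hmem.2.2⟩
          exact Set.indicator_of_notMem hmem _
        simp [h0]
    rw [heq, integrable_indicator_iff measurableSet_Ioo]
    have : IntervalIntegrable (fun u => ‖w u‖ * ((t - u) ^ (1 - α) / (1 - α))) volume 0 t := by
      apply hw_int.norm.mul_continuousOn
      apply ContinuousOn.div_const
      apply (continuousOn_const.sub continuousOn_id).rpow_const
      intro x hx
      exact Or.inr (by linarith [hα.2])
    exact (intervalIntegrable_iff_integrableOn_Ioo_of_le ht.le).1 this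

lemma T3int {α : ℝ} (hα : α ∈ Set.Ioo (0:ℝ) 1) {t : ℝ} (ht : 0 < t) {w : ℝ → ℝ}
    (hw_int : IntervalIntegrable w volume 0 t) (hw_cont : ContinuousOn w (Set.Ioi 0)) :
    IntegrableOn (fun p : ℝ × ℝ => w p.2 * (t - p.1) ^ (-1 - α))
      {p : ℝ × ℝ | 0 < p.1 ∧ p.1 < p.2 ∧ p.2 < t} volume := by
  set T := {p : ℝ × ℝ | 0 < p.1 ∧ p.1 < p.2 ∧ p.2 < t} with hTdef
  set F : ℝ × ℝ → ℝ := fun p => w p.2 * (t - p.1) ^ (-1 - α) with hFdef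
  have hTm : MeasurableSet T := (triangle_isOpen 0 t).measurableSet
  rw [← integrable_indicator_iff hTm]
  have hcontF : ContinuousOn F T := by
    apply ContinuousOn.mul
    · exact hw_cont.comp continuous_snd.continuousOn (fun p hp => lt_trans hp.1 hp.2.1)
    · exact (continuousOn_const.sub continuous_fst.continuousOn).rpow_const
        (fun p hp => Or.inl (ne_of_gt (sub_pos.2 (lt_trans hp.2.1 hp.2.2))))
  have hmeas : AEStronglyMeasurable (T.indicator F) (volume.prod volume) := by
    rw [← Measure.volume_eq_prod]
    exact (aestronglyMeasurable_indicator_iff hTm).2 (hcontF.aestronglyMeasurable hTm)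
  rw [Measure.volume_eq_prod]
  refine (integrable_prod_iff' hmeas).2 ⟨?_, ?_⟩
  · refine Filter.Eventually.of_forall (fun u => ?_)
    by_cases hu : 0 < u ∧ u < t
    · have heq : (fun τ => T.indicator F (τ, u))
          = (Set.Ioo 0 u).indicator (fun τ => w u * (t - τ) ^ (-1 - α)) := by
        funext τ
        by_cases hτ : τ ∈ Set.Ioo 0 u
        · have hmem : (τ, u) ∈ T := ⟨hτ.1, hτ.2, hu.2⟩
          rw [Set.indicator_of_mem hτ, Set.indicator_of_mem hmem]
        · have hmem : (τ, u) ∉ T := fun hmem => hτ ⟨hmem.1, hmem.2.1⟩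
          rw [Set.indicator_of_notMem hτ, Set.indicator_of_notMem hmem]
      rw [heq, integrable_indicator_iff measurableSet_Ioo]
      have : IntervalIntegrable (fun τ => w u * (t - τ) ^ (-1 - α)) volume 0 u := by
        apply IntervalIntegrable.const_mul
        apply ContinuousOn.intervalIntegrable
        apply (continuousOn_const.sub continuousOn_id).rpow_const
        intro x hx
        rw [Set.uIcc_of_le hu.1.le] at hx
        exact Or.inl (ne_of_gt (by linarith [hx.2, hu.2] : (0:ℝ) < t - x))
      exact (intervalIntegrable_iff_integrableOn_Ioo_of_le hu.1.le).1 this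
    · have heq : (fun τ => T.indicator F (τ, u)) = fun _ => (0:ℝ) := by
        funext τ
        have hmem : (τ, u) ∉ T := fun hmem => hu ⟨lt_trans hmem.1 hmem.2.1, hmem.2.2⟩
        exact Set.indicator_of_notMem hmem _
      rw [heq]
      exact integrable_zero _ _ _
  · have heq : (fun u => ∫ τ, ‖T.indicator F (τ, u)‖)
        = (Set.Ioo 0 t).indicator
            (fun u => (‖w u‖ * (t - u) ^ (-α) - ‖w u‖ * t ^ (-α)) / α) := by
      funext u
      by_cases hu : u ∈ Set.Ioo 0 t
      · rw [Set.indicator_of_mem hu]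
        have hnorm : (fun τ => ‖T.indicator F (τ, u)‖)
            = (Set.Ioo 0 u).indicator (fun τ => ‖w u‖ * (t - τ) ^ (-1 - α)) := by
          funext τ
          by_cases hτ : τ ∈ Set.Ioo 0 u
          · have hmem : (τ, u) ∈ T := ⟨hτ.1, hτ.2, hu.2⟩
            rw [Set.indicator_of_mem hτ, Set.indicator_of_mem hmem, hFdef]
            simp only [norm_mul]
            rw [Real.norm_eq_abs ((t - τ) ^ (-1 - α)),
              abs_of_nonneg (Real.rpow_nonneg (by linarith [hτ.2, hu.2] : (0:ℝ) ≤ t - τ) _)]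
          · have hmem : (τ, u) ∉ T := fun hmem => hτ ⟨hmem.1, hmem.2.1⟩
            rw [Set.indicator_of_notMem hτ, Set.indicator_of_notMem hmem, norm_zero]
        rw [hnorm, MeasureTheory.integral_indicator measurableSet_Ioo, MeasureTheory.integral_const_mul,
          K3 hα hu.1 hu.2]
        ring
      · rw [Set.indicator_of_notMem hu]
        have h0 : ∀ τ, T.indicator F (τ, u) = 0 := fun τ => by
          have hmem : (τ, u) ∉ T := fun hmem => hu ⟨lt_trans hmem.1 hmem.2.1, hmem.2.2⟩
          exact Set.indicator_of_notMem hmem _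
        simp [h0]
    rw [heq, integrable_indicator_iff measurableSet_Ioo]
    have h1 : IntervalIntegrable (fun u => ‖w u‖ * (t - u) ^ (-α)) volume 0 t :=
      Imul hα ht hw_int.norm hw_cont.norm
    have h2 : IntervalIntegrable (fun u => ‖w u‖ * t ^ (-α)) volume 0 t :=
      hw_int.norm.mul_const _
    have h3 := (h1.sub h2).div_const α
    exact (intervalIntegrable_iff_integrableOn_Ioo_of_le ht.le).1 h3

lemma my_swap (a b : ℝ) (f : ℝ → ℝ → ℝ)
    (hf : IntegrableOn (fun p : ℝ × ℝ => f p.1 p.2)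
      {p : ℝ × ℝ | a < p.1 ∧ p.1 < p.2 ∧ p.2 < b} volume) :
    (∫ x in Set.Ioo a b, ∫ y in Set.Ioo x b, f x y) =
      ∫ y in Set.Ioo a b, ∫ x in Set.Ioo a y, f x y := by
  set T : Set (ℝ × ℝ) := {p : ℝ × ℝ | a < p.1 ∧ p.1 < p.2 ∧ p.2 < b} with hT
  have hTm : MeasurableSet T := (triangle_isOpen a b).measurableSet
  have hInd : Integrable (T.indicator fun p : ℝ × ℝ => f p.1 p.2) volume :=
    (integrable_indicator_iff hTm).2 hf
  have key : ∀ x : ℝ, (Ioo a b).indicator (fun x => ∫ y, (Ioo x b).indicator (f x) y) x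
      = ∫ y, T.indicator (fun p : ℝ × ℝ => f p.1 p.2) (x, y) := by
    intro x
    by_cases hx : x ∈ Ioo a b
    · rw [Set.indicator_of_mem hx]
      congr 1; funext y
      by_cases hy : y ∈ Ioo x b
      · rw [Set.indicator_of_mem hy, Set.indicator_of_mem]
        exact ⟨hx.1, hy.1, hy.2⟩
      · rw [Set.indicator_of_notMem hy, Set.indicator_of_notMem]
        intro hmem; exact hy ⟨hmem.2.1, hmem.2.2⟩
    · rw [Set.indicator_of_notMem hx]
      symm
      have : ∀ y, T.indicator (fun p : ℝ × ℝ => f p.1 p.2) (x, y) = 0 := by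
        intro y
        apply Set.indicator_of_notMem
        intro hmem
        exact hx ⟨hmem.1, lt_trans hmem.2.1 hmem.2.2⟩
      simp [this]
  have key2 : ∀ y : ℝ, (Ioo a b).indicator (fun y => ∫ x, (Ioo a y).indicator (fun x => f x y) x) y
      = ∫ x, T.indicator (fun p : ℝ × ℝ => f p.1 p.2) (x, y) := by
    intro y
    by_cases hy : y ∈ Ioo a b
    · rw [Set.indicator_of_mem hy]
      congr 1; funext x
      by_cases hx : x ∈ Ioo a y
      · rw [Set.indicator_of_mem hx, Set.indicator_of_mem]
        exact ⟨hx.1, hx.2, hy.2⟩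
      · rw [Set.indicator_of_notMem hx, Set.indicator_of_notMem]
        intro hmem; exact hx ⟨hmem.1, hmem.2.1⟩
    · rw [Set.indicator_of_notMem hy]
      symm
      have : ∀ x, T.indicator (fun p : ℝ × ℝ => f p.1 p.2) (x, y) = 0 := by
        intro x
        apply Set.indicator_of_notMem
        intro hmem
        exact hy ⟨lt_trans hmem.1 hmem.2.1, hmem.2.2⟩
      simp [this]
  calc (∫ x in Set.Ioo a b, ∫ y in Set.Ioo x b, f x y)
      = ∫ x, (Ioo a b).indicator (fun x => ∫ y, (Ioo x b).indicator (f x) y) x := by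
        rw [MeasureTheory.integral_indicator measurableSet_Ioo]
        apply setIntegral_congr_fun measurableSet_Ioo
        intro x _
        exact (MeasureTheory.integral_indicator measurableSet_Ioo).symm
    _ = ∫ x, ∫ y, T.indicator (fun p : ℝ × ℝ => f p.1 p.2) (x, y) := by
        congr 1; funext x; exact key x
    _ = ∫ y, ∫ x, T.indicator (fun p : ℝ × ℝ => f p.1 p.2) (x, y) := by
        apply integral_integral_swap
        rw [← Measure.volume_eq_prod]
        exact hInd
    _ = ∫ y, (Ioo a b).indicator (fun y => ∫ x, (Ioo a y).indicator (fun x => f x y) x) y := by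
        congr 1; funext y; exact (key2 y).symm
    _ = ∫ y in Set.Ioo a b, ∫ x in Set.Ioo a y, f x y := by
        rw [MeasureTheory.integral_indicator measurableSet_Ioo]
        apply setIntegral_congr_fun measurableSet_Ioo
        intro y _
        exact (MeasureTheory.integral_indicator measurableSet_Ioo)
lemma Jcont {α : ℝ} (hα : α ∈ Set.Ioo (0:ℝ) 1) {t : ℝ} (ht : 0 < t) {w : ℝ → ℝ}
    (hw_cont : ContinuousOn w (Set.Ioi 0))
    (hw_int : ∀ r > (0:ℝ), IntervalIntegrable w volume 0 r) :
    ∀ s₀ ∈ Set.Ioo (3*t/4) (3*t/2),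
      ContinuousAt (fun s => ∫ u in (0:ℝ)..s, w u * (s - u) ^ (-α)) s₀ := by
  intro s₀ hs₀
  have hUnhds : Set.Ioo (3*t/4) (3*t/2) ∈ nhds s₀ := isOpen_Ioo.mem_nhds hs₀
  set A : ℝ → ℝ := fun s => ∫ u in (0:ℝ)..(t/2), w u * (s - u) ^ (-α) with hAdef
  set B : ℝ → ℝ := fun s => ∫ x in (0:ℝ)..(s - t/2), w (s - x) * x ^ (-α) with hBdef
  -- decomposition
  have hJAB : ∀ s ∈ Set.Ioo (3*t/4) (3*t/2),
      (∫ u in (0:ℝ)..s, w u * (s - u) ^ (-α)) = A s + B s := by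
    intro s hs
    have hs1 : 3*t/4 < s := hs.1
    have hs2 : s < 3*t/2 := hs.2
    have h1 : IntervalIntegrable (fun u => w u * (s - u) ^ (-α)) volume 0 (t/2) := by
      apply (hw_int (t/2) (by linarith)).mul_continuousOn
      apply (continuousOn_const.sub continuousOn_id).rpow_const
      intro x hx
      rw [Set.uIcc_of_le (by linarith : (0:ℝ) ≤ t/2)] at hx
      exact Or.inl (ne_of_gt (by linarith [hx.2] : (0:ℝ) < s - x))
    have h2 : IntervalIntegrable (fun u => w u * (s - u) ^ (-α)) volume (t/2) s := by
      apply (Ia hα (t/2) s).continuousOn_mul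
      refine hw_cont.mono ?_
      rw [Set.uIcc_of_le (by linarith : t/2 ≤ s)]
      intro x hx
      exact Set.mem_Ioi.2 (lt_of_lt_of_le (by linarith) hx.1)
    have hadd := intervalIntegral.integral_add_adjacent_intervals h1 h2
    have hB : B s = ∫ u in (t/2)..s, w u * (s - u) ^ (-α) := by
      rw [hBdef]
      have := intervalIntegral.integral_comp_sub_left
        (a := (0:ℝ)) (b := s - t/2) (fun u => w u * (s - u) ^ (-α)) s
      simpa using this
    rw [← hadd, hB]
  -- continuity of A
  have contA : ContinuousAt A s₀ := by
    have hA' : A = fun s => ∫ u in Set.Ioc 0 (t/2), w u * (s - u) ^ (-α) := by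
      funext s
      rw [hAdef]
      exact intervalIntegral.integral_of_le (by linarith)
    rw [hA']
    apply MeasureTheory.continuousAt_of_dominated
      (bound := fun u => ‖w u‖ * (t/4) ^ (-α))
    · filter_upwards [hUnhds] with s hs
      apply AEStronglyMeasurable.mul
      · exact ((hw_int (t/2) (by linarith)).1).aestronglyMeasurable
      · refine ContinuousOn.aestronglyMeasurable ?_ measurableSet_Ioc
        apply (continuousOn_const.sub continuousOn_id).rpow_const
        intro x hx
        exact Or.inl (ne_of_gt (by linarith [hx.2, hs.1] : (0:ℝ) < s - x))
    · filter_upwards [hUnhds] with s hs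
      rw [MeasureTheory.ae_restrict_iff' measurableSet_Ioc]
      refine Filter.Eventually.of_forall (fun u hu => ?_)
      have h1 : (0:ℝ) < t/4 := by linarith
      have h2 : t/4 ≤ s - u := by
        have hu2 := hu.2
        have hs1 := hs.1
        linarith
      rw [norm_mul, Real.norm_eq_abs ((s - u) ^ (-α)),
        abs_of_nonneg (Real.rpow_nonneg (by linarith) _)]
      exact mul_le_mul_of_nonneg_left
        (Real.rpow_le_rpow_of_nonpos h1 h2 (by linarith [hα.1])) (norm_nonneg _)
    · exact ((hw_int (t/2) (by linarith)).1).norm.mul_const _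
    · rw [MeasureTheory.ae_restrict_iff' measurableSet_Ioc]
      refine Filter.Eventually.of_forall (fun u hu => ?_)
      apply ContinuousAt.mul continuousAt_const
      apply ContinuousAt.rpow_const (by fun_prop)
      left
      have hs1 : 3*t/4 < s₀ := hs₀.1
      exact ne_of_gt (by linarith [hu.2] : (0:ℝ) < s₀ - u)
  -- continuity of B
  have contB : ContinuousAt B s₀ := by
    obtain ⟨C, hC⟩ := (isCompact_Icc (a := t/2) (b := 3*t/2)).exists_bound_of_continuousOn
      (hw_cont.mono (fun x hx => Set.mem_Ioi.2 (lt_of_lt_of_le (by linarith) hx.1)))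
    have hC' : ∀ y ∈ Set.Icc (t/2) (3*t/2), ‖w y‖ ≤ max C 0 := fun y hy =>
      le_trans (hC y hy) (le_max_left _ _)
    set B' : ℝ → ℝ := fun s => ∫ x, (Set.Ioc 0 (s - t/2)).indicator
        (fun x => w (s - x) * x ^ (-α)) x with hB'def
    have hBB' : (fun s => B s) =ᶠ[nhds s₀] fun s => B' s := by
      filter_upwards [hUnhds] with s hs
      rw [hBdef, hB'def]
      simp only
      rw [intervalIntegral.integral_of_le (by linarith [hs.1] : (0:ℝ) ≤ s - t/2),
        MeasureTheory.integral_indicator measurableSet_Ioc]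
    have contB' : ContinuousAt B' s₀ := by
      apply MeasureTheory.continuousAt_of_dominated
        (bound := (Set.Ioo 0 (3*t/2)).indicator (fun x => max C 0 * x ^ (-α)))
      · filter_upwards [hUnhds] with s hs
        apply (aestronglyMeasurable_indicator_iff measurableSet_Ioc).2
        apply ContinuousOn.aestronglyMeasurable _ measurableSet_Ioc
        apply ContinuousOn.mul
        · apply hw_cont.comp (continuous_const.sub continuous_id).continuousOn
          intro x hx
          exact Set.mem_Ioi.2 (by linarith [hx.2, hs.1] : (0:ℝ) < s - x)
        · exact ContinuousOn.rpow_const continuousOn_id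
            (fun x hx => Or.inl (ne_of_gt hx.1))
      · filter_upwards [hUnhds] with s hs
        refine Filter.Eventually.of_forall (fun x => ?_)
        by_cases hx : x ∈ Set.Ioc 0 (s - t/2)
        · rw [Set.indicator_of_mem hx]
          have hx3 : x ∈ Set.Ioo 0 (3*t/2) := ⟨hx.1, by linarith [hx.2, hs.2]⟩
          rw [Set.indicator_of_mem hx3, norm_mul, Real.norm_eq_abs (x ^ (-α)),
            abs_of_nonneg (Real.rpow_nonneg hx.1.le _)]
          apply mul_le_mul_of_nonneg_right _ (Real.rpow_nonneg hx.1.le _)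
          apply hC'
          constructor
          · linarith [hx.2]
          · linarith [hx.1, hs.2]
        · rw [Set.indicator_of_notMem hx, norm_zero]
          apply Set.indicator_apply_nonneg
          intro hx3
          exact mul_nonneg (le_max_right _ _) (Real.rpow_nonneg hx3.1.le _)
      · rw [MeasureTheory.integrable_indicator_iff measurableSet_Ioo]
        refine (intervalIntegrable_iff_integrableOn_Ioo_of_le (by linarith)).1 ?_
        exact (intervalIntegral.intervalIntegrable_rpow'
          (by linarith [hα.2] : (-1:ℝ) < -α)).const_mul _
      · have hne : ∀ᵐ x : ℝ, x ≠ s₀ - t/2 := by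
          have h0 : (volume : Measure ℝ) {s₀ - t/2} = 0 := measure_singleton _
          filter_upwards [MeasureTheory.compl_mem_ae_iff.2 h0] with x hx
          simpa using hx
        filter_upwards [hne] with x hx
        by_cases hx0 : x ≤ 0
        · have heq : (fun s => (Set.Ioc 0 (s - t/2)).indicator
              (fun x => w (s - x) * x ^ (-α)) x) =ᶠ[nhds s₀] fun _ => (0:ℝ) :=
            Filter.Eventually.of_forall (fun s =>
              Set.indicator_of_notMem (fun hmem => absurd hmem.1 (not_lt.2 hx0)) _)
          exact continuousAt_const.congr heq.symm
        · push_neg at hx0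
          by_cases hlt : x < s₀ - t/2
          · have hev : ∀ᶠ s in nhds s₀, x < s - t/2 := by
              filter_upwards [eventually_gt_nhds (by linarith : x + t/2 < s₀)] with s hs
              linarith
            have heq : (fun s => (Set.Ioc 0 (s - t/2)).indicator
                (fun x => w (s - x) * x ^ (-α)) x)
                =ᶠ[nhds s₀] fun s => w (s - x) * x ^ (-α) := by
              filter_upwards [hev] with s hs
              have hmem : x ∈ Set.Ioc 0 (s - t/2) := ⟨hx0, hs.le⟩
              exact Set.indicator_of_mem hmem _
            have hg : ContinuousAt (fun s => w (s - x) * x ^ (-α)) s₀ := by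
              have h2 : ContinuousAt (fun s : ℝ => s - x) s₀ := (continuous_sub_right x).continuousAt
              have h1 : ContinuousAt w (s₀ - x) :=
                hw_cont.continuousAt (Ioi_mem_nhds (by linarith [hs₀.1] : (0:ℝ) < s₀ - x))
              exact (ContinuousAt.comp (f := fun s : ℝ => s - x) h1 h2).mul continuousAt_const
            exact hg.congr heq.symm
          · have hgt : s₀ - t/2 < x := lt_of_le_of_ne (not_lt.1 hlt) (Ne.symm hx)
            have hev : ∀ᶠ s in nhds s₀, s - t/2 < x := by
              filter_upwards [eventually_lt_nhds (by linarith : s₀ < x + t/2)] with s hs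
              linarith
            have heq : (fun s => (Set.Ioc 0 (s - t/2)).indicator
                (fun x => w (s - x) * x ^ (-α)) x) =ᶠ[nhds s₀] fun _ => (0:ℝ) := by
              filter_upwards [hev] with s hs
              exact Set.indicator_of_notMem (fun hmem => absurd hmem.2 (not_le.2 hs)) _
            exact continuousAt_const.congr heq.symm
    exact contB'.congr hBB'.symm
  have heq : (fun s => A s + B s)
      =ᶠ[nhds s₀] fun s => ∫ u in (0:ℝ)..s, w u * (s - u) ^ (-α) := by
    filter_upwards [hUnhds] with s hs
    exact (hJAB s hs).symm
  exact (contA.add contB).congr heq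
lemma ftcV {v v' : ℝ → ℝ} (hv : ContinuousOn v (Set.Ici 0))
    (hv' : ∀ x > (0:ℝ), HasDerivAt v (v' x) x)
    (hint : ∀ r > (0:ℝ), IntervalIntegrable v' volume 0 r)
    {a b : ℝ} (ha : 0 ≤ a) (hab : a < b) :
    ∫ u in Set.Ioo a b, v' u = v b - v a := by
  rw [← MeasureTheory.integral_Ioc_eq_integral_Ioo, ← intervalIntegral.integral_of_le hab.le]
  apply intervalIntegral.integral_eq_sub_of_hasDeriv_right_of_le hab.le
  · exact hv.mono (fun x hx => le_trans ha hx.1)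
  · exact fun x hx => (hv' x (lt_of_le_of_lt ha hx.1)).hasDerivWithinAt
  · have hb : 0 < b := lt_of_le_of_lt ha hab
    refine (hint b hb).mono_set ?_
    rw [Set.uIcc_of_le hab.le, Set.uIcc_of_le hb.le]
    exact Set.Icc_subset_Icc ha le_rfl

theorem caputo_alternative_form (α : ℝ) (hα : α ∈ Set.Ioo (0 : ℝ) 1) (v v' : ℝ → ℝ)
    (hv : ContinuousOn v (Set.Ici 0))
    (hv' : ∀ t > (0 : ℝ), HasDerivAt v (v' t) t)
    (hv'c : ContinuousOn v' (Set.Ioi 0))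
    (hint : ∀ t > (0 : ℝ), IntervalIntegrable v' volume 0 t) :
    ∀ t > (0 : ℝ),
      deriv (fun r : ℝ => ∫ τ in (0 : ℝ)..r, (v τ - v 0) * (r - τ) ^ (-α)) t =
        α * (∫ τ in (0 : ℝ)..t, (v t - v τ) * (t - τ) ^ (-1 - α)) +
          (v t - v 0) * t ^ (-α) := by
  intro t ht
  set J : ℝ → ℝ := fun s => ∫ u in (0:ℝ)..s, v' u * (s - u) ^ (-α) with hJdef
  -- J s as Ioo integral for 0 < s
  have hJIoo : ∀ s, 0 < s → J s = ∫ u in Set.Ioo 0 s, v' u * (s - u) ^ (-α) := by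
    intro s hs
    beta_reduce
    rw [hJdef]
    simp only
    rw [intervalIntegral.integral_of_le hs.le, MeasureTheory.integral_Ioc_eq_integral_Ioo]
  -- common value H r
  have hFH : ∀ r, 0 < r → (∫ τ in (0:ℝ)..r, (v τ - v 0) * (r - τ) ^ (-α))
      = ∫ u in Set.Ioo 0 r, v' u * ((r - u) ^ (1 - α) / (1 - α)) := by
    intro r hr
    rw [intervalIntegral.integral_of_le hr.le, MeasureTheory.integral_Ioc_eq_integral_Ioo]
    have step1 : (∫ τ in Set.Ioo 0 r, (v τ - v 0) * (r - τ) ^ (-α))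
        = ∫ τ in Set.Ioo 0 r, ∫ u in Set.Ioo 0 τ, v' u * (r - τ) ^ (-α) := by
      apply MeasureTheory.setIntegral_congr_fun measurableSet_Ioo
      intro τ hτ
      beta_reduce
      rw [MeasureTheory.integral_mul_const, ftcV hv hv' hint le_rfl hτ.1]
    have step2 := (my_swap 0 r (fun u τ => v' u * (r - τ) ^ (-α))
      (T1int hα hr (hint r hr)))
    rw [step1, ← step2]
    apply MeasureTheory.setIntegral_congr_fun measurableSet_Ioo
    intro u hu
    beta_reduce
    rw [MeasureTheory.integral_const_mul, K1 hα hu.2]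
  have hPH : ∀ r, 0 < r → (∫ s in (0:ℝ)..r, J s)
      = ∫ u in Set.Ioo 0 r, v' u * ((r - u) ^ (1 - α) / (1 - α)) := by
    intro r hr
    rw [intervalIntegral.integral_of_le hr.le, MeasureTheory.integral_Ioc_eq_integral_Ioo]
    have step1 : (∫ s in Set.Ioo 0 r, J s)
        = ∫ s in Set.Ioo 0 r, ∫ u in Set.Ioo 0 s, v' u * (s - u) ^ (-α) := by
      apply MeasureTheory.setIntegral_congr_fun measurableSet_Ioo
      intro s hs
      beta_reduce
      exact hJIoo s hs.1
    have step2 := (my_swap 0 r (fun u s => v' u * (s - u) ^ (-α))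
      (T2int hα hr (hint r hr) hv'c))
    rw [step1, ← step2]
    apply MeasureTheory.setIntegral_congr_fun measurableSet_Ioo
    intro u hu
    beta_reduce
    rw [MeasureTheory.integral_const_mul, K2 hα hu.2]
  -- eventual equality
  have hEq : (fun r : ℝ => ∫ τ in (0 : ℝ)..r, (v τ - v 0) * (r - τ) ^ (-α))
      =ᶠ[nhds t] fun r => ∫ s in (0:ℝ)..r, J s := by
    filter_upwards [Ioi_mem_nhds ht] with r hr
    exact (hFH r hr).trans (hPH r hr).symm
  -- FTC: derivative of r ↦ ∫_0^r J is J t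
  have hJcontAt := Jcont hα ht hv'c hint
  have htmem : t ∈ Set.Ioo (3*t/4) (3*t/2) := ⟨by linarith, by linarith⟩
  have hJint : IntervalIntegrable J volume 0 t := by
    have hTm : MeasurableSet {p : ℝ × ℝ | 0 < p.1 ∧ p.1 < p.2 ∧ p.2 < t} :=
      (triangle_isOpen 0 t).measurableSet
    have hInd : Integrable ({p : ℝ × ℝ | 0 < p.1 ∧ p.1 < p.2 ∧ p.2 < t}.indicator
        (fun p : ℝ × ℝ => v' p.1 * (p.2 - p.1) ^ (-α))) volume :=
      (MeasureTheory.integrable_indicator_iff hTm).2 (T2int hα ht (hint t ht) hv'c)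
    rw [Measure.volume_eq_prod] at hInd
    have hIJ := hInd.integral_prod_right
    rw [intervalIntegrable_iff_integrableOn_Ioo_of_le ht.le]
    refine (hIJ.integrableOn (s := Set.Ioo 0 t)).congr_fun ?_ measurableSet_Ioo
    intro s hs
    beta_reduce
    have heq : (fun u => {p : ℝ × ℝ | 0 < p.1 ∧ p.1 < p.2 ∧ p.2 < t}.indicator
        (fun p : ℝ × ℝ => v' p.1 * (p.2 - p.1) ^ (-α)) (u, s))
        = (Set.Ioo 0 s).indicator (fun u => v' u * (s - u) ^ (-α)) := by
      funext u
      by_cases hu : u ∈ Set.Ioo 0 s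
      · have hmem : ((u, s) : ℝ × ℝ) ∈ {p : ℝ × ℝ | 0 < p.1 ∧ p.1 < p.2 ∧ p.2 < t} :=
          ⟨hu.1, hu.2, hs.2⟩
        rw [Set.indicator_of_mem hu, Set.indicator_of_mem hmem]
      · have hmem : ((u, s) : ℝ × ℝ) ∉ {p : ℝ × ℝ | 0 < p.1 ∧ p.1 < p.2 ∧ p.2 < t} :=
          fun hmem => hu ⟨hmem.1, hmem.2.1⟩
        rw [Set.indicator_of_notMem hu, Set.indicator_of_notMem hmem]
    show (∫ u, {p : ℝ × ℝ | 0 < p.1 ∧ p.1 < p.2 ∧ p.2 < t}.indicator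
        (fun p : ℝ × ℝ => v' p.1 * (p.2 - p.1) ^ (-α)) (u, s)) = J s
    rw [heq, MeasureTheory.integral_indicator measurableSet_Ioo, ← hJIoo s hs.1]
  have hmeasJ : StronglyMeasurableAtFilter J (nhds t) volume := by
    refine ⟨Set.Ioo (3*t/4) (3*t/2), isOpen_Ioo.mem_nhds htmem, ?_⟩
    refine ContinuousOn.aestronglyMeasurable ?_ measurableSet_Ioo
    exact fun s hs => (hJcontAt s hs).continuousWithinAt
  have hderiv := intervalIntegral.integral_hasDerivAt_right hJint hmeasJ (hJcontAt t htmem)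
  -- compute the RHS
  have hRHSint : (∫ τ in (0:ℝ)..t, (v t - v τ) * (t - τ) ^ (-1 - α))
      = ∫ u in Set.Ioo 0 t, v' u * (((t - u) ^ (-α) - t ^ (-α)) / α) := by
    rw [intervalIntegral.integral_of_le ht.le, MeasureTheory.integral_Ioc_eq_integral_Ioo]
    have step1 : (∫ τ in Set.Ioo 0 t, (v t - v τ) * (t - τ) ^ (-1 - α))
        = ∫ τ in Set.Ioo 0 t, ∫ u in Set.Ioo τ t, v' u * (t - τ) ^ (-1 - α) := by
      apply MeasureTheory.setIntegral_congr_fun measurableSet_Ioo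
      intro τ hτ
      beta_reduce
      rw [MeasureTheory.integral_mul_const, ftcV hv hv' hint hτ.1.le hτ.2]
    have step2 := my_swap 0 t (fun τ u => v' u * (t - τ) ^ (-1 - α))
      (T3int hα ht (hint t ht) hv'c)
    rw [step1, step2]
    apply MeasureTheory.setIntegral_congr_fun measurableSet_Ioo
    intro u hu
    beta_reduce
    rw [MeasureTheory.integral_const_mul, K3 hα hu.1 hu.2]
  have hIone : MeasureTheory.IntegrableOn (fun u => v' u * (t - u) ^ (-α)) (Set.Ioo 0 t) volume :=
    (intervalIntegrable_iff_integrableOn_Ioo_of_le ht.le).1 (Imul hα ht (hint t ht) hv'c)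
  have hItwo : MeasureTheory.IntegrableOn (fun u => v' u * t ^ (-α)) (Set.Ioo 0 t) volume :=
    (intervalIntegrable_iff_integrableOn_Ioo_of_le ht.le).1 ((hint t ht).mul_const _)
  have hsplit : α * (∫ u in Set.Ioo 0 t, v' u * (((t - u) ^ (-α) - t ^ (-α)) / α))
      = (∫ u in Set.Ioo 0 t, v' u * (t - u) ^ (-α)) - ∫ u in Set.Ioo 0 t, v' u * t ^ (-α) := by
    rw [← MeasureTheory.integral_const_mul, ← MeasureTheory.integral_sub hIone hItwo]
    apply MeasureTheory.setIntegral_congr_fun measurableSet_Ioo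
    intro u _
    beta_reduce
    have hα0 : α ≠ 0 := ne_of_gt hα.1
    field_simp
  have hlast : (∫ u in Set.Ioo 0 t, v' u * t ^ (-α)) = (v t - v 0) * t ^ (-α) := by
    rw [MeasureTheory.integral_mul_const, ftcV hv hv' hint le_rfl ht]
  -- put everything together
  rw [hEq.deriv_eq, hderiv.deriv, hRHSint, hsplit, hlast, hJIoo t ht]
  ring
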